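/- arXiv:1606.05626 — 4 statements merged into one kernel-verified Lean document; each statement's English description precedes it below -/
import Mathlib

section
/- (Projection Lemma, Kempe-Kitaev-Regev) Let H = H₁ + H₂ be a sum of two Hermitian operators on a finite-dimensional complex Hilbert space ℋ, and let S ⊆ ℋ be a nonzero subspace such that H₁ψ = 0 for every ψ ∈ S and ⟨ψ, H₁ψ⟩ ≥ J‖ψ‖² for every ψ in the orthogonal complement S^⊥, where J > 2‖H₂‖ (‖·‖ denoting the operator/spectral norm). Then λ(H₂|_S) − ‖H₂‖²/(J − 2‖H₂‖) ≤ λ(H) ≤ λ(H₂|_S), where λ(·) denotes the smallest eigenvalue and λ(H₂|_S) := min{⟨ψ, H₂ψ⟩ : ψ ∈ S, ‖ψ‖ = 1}. -/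
/-!
Write `ψ = x + y` with `x ∈ S`, `y ∈ Sᗮ`. The upper bound is the Rayleigh quotient restricted
to `S`, where `H₁` vanishes. For the lower bound, `H₁` only sees `y` and contributes at least
`J‖y‖²`, while `H₂` contributes at least `λ(H₂|_S)‖x‖² - 2‖H₂‖‖x‖‖y‖ - ‖H₂‖‖y‖²`. Since
`λ(H₂|_S) ≤ ‖H₂‖`, completing the square in `‖y‖`, with leading coefficient `J - 2‖H₂‖`, costs
at most `‖H₂‖² / (J - 2‖H₂‖) · ‖ψ‖²`.
-/

variable {E : Type*} [NormedAddCommGroup E] [InnerProductSpace ℂ E] [FiniteDimensional ℂ E]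

/-- The smallest eigenvalue of a Hermitian operator `H`, equivalently the infimum of the
Rayleigh quotient `⟨ψ, Hψ⟩` over unit vectors `ψ`. -/
noncomputable def minEigenvalue (H : E →L[ℂ] E) : ℝ :=
  sInf {r : ℝ | ∃ ψ : E, ‖ψ‖ = 1 ∧ (inner (𝕜 := ℂ) ψ (H ψ)).re = r}

/-- The smallest eigenvalue of `H` restricted to the subspace `S`, i.e. the infimum of
`⟨ψ, Hψ⟩` over unit vectors `ψ ∈ S`. -/
noncomputable def minEigenvalueOn (H : E →L[ℂ] E) (S : Submodule ℂ E) : ℝ :=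
  sInf {r : ℝ | ∃ ψ ∈ S, ‖ψ‖ = 1 ∧ (inner (𝕜 := ℂ) ψ (H ψ)).re = r}

section Estimates

open RCLike

variable {𝕜 F : Type*} [RCLike 𝕜] [NormedAddCommGroup F] [InnerProductSpace 𝕜 F]

theorem abs_re_inner_apply_le (T : F →L[𝕜] F) (x y : F) :
    |re (inner 𝕜 x (T y))| ≤ ‖T‖ * ‖x‖ * ‖y‖ :=
  calc |re (inner 𝕜 x (T y))| ≤ ‖inner 𝕜 x (T y)‖ := abs_re_le_norm _
    _ ≤ ‖x‖ * ‖T y‖ := norm_inner_le_norm _ _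
    _ ≤ ‖x‖ * (‖T‖ * ‖y‖) := by gcongr; exact T.le_opNorm y
    _ = ‖T‖ * ‖x‖ * ‖y‖ := by ring

theorem le_re_inner_add_apply_add (T : F →L[𝕜] F) (x y : F) :
    re (inner 𝕜 x (T x)) - 2 * ‖T‖ * ‖x‖ * ‖y‖ - ‖T‖ * ‖y‖ ^ 2 ≤
      re (inner 𝕜 (x + y) (T (x + y))) := by
  have hxy := abs_le.mp (abs_re_inner_apply_le T x y)
  have hyx := abs_le.mp (abs_re_inner_apply_le T y x)
  have hyy := abs_le.mp (abs_re_inner_apply_le T y y)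
  simp only [map_add, inner_add_left, inner_add_right]
  linarith [hxy.1, hyx.1, hyy.1]

theorem LinearMap.IsSymmetric.inner_add_apply_add_of_apply_eq_zero {T : F →ₗ[𝕜] F}
    (hT : T.IsSymmetric) {x : F} (hx : T x = 0) (y : F) :
    inner 𝕜 (x + y) (T (x + y)) = inner 𝕜 y (T y) := by
  rw [map_add, hx, zero_add, inner_add_left, ← hT, hx, inner_zero_left, zero_add]

theorem mul_norm_sq_le_re_inner_add_apply (H₁ H₂ : F →L[𝕜] F)
    (hH₁ : (H₁ : F →ₗ[𝕜] F).IsSymmetric)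
    (S : Submodule 𝕜 F) [S.HasOrthogonalProjection] {l J : ℝ}
    (hl : ∀ x ∈ S, l * ‖x‖ ^ 2 ≤ re (inner 𝕜 x (H₂ x))) (hlH₂ : l ≤ ‖H₂‖)
    (hker : ∀ x ∈ S, H₁ x = 0) (hbig : ∀ y ∈ Sᗮ, J * ‖y‖ ^ 2 ≤ re (inner 𝕜 y (H₁ y)))
    (hJ : 2 * ‖H₂‖ < J) (ψ : F) :
    (l - ‖H₂‖ ^ 2 / (J - 2 * ‖H₂‖)) * ‖ψ‖ ^ 2 ≤ re (inner 𝕜 ψ ((H₁ + H₂) ψ)) := by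
  obtain ⟨x, hx, y, hy, rfl⟩ := S.exists_add_mem_mem_orthogonal ψ
  have hpyth : ‖x + y‖ ^ 2 = ‖x‖ ^ 2 + ‖y‖ ^ 2 := by
    simpa only [sq] using norm_add_sq_eq_norm_sq_add_norm_sq_of_inner_eq_zero x y
      (Submodule.inner_right_of_mem_orthogonal hx hy)
  have hH₁xy : inner 𝕜 (x + y) (H₁ (x + y)) = inner 𝕜 y (H₁ y) :=
    hH₁.inner_add_apply_add_of_apply_eq_zero (hker x hx) y
  obtain ⟨c, hc, rfl⟩ : ∃ c, 0 < c ∧ J = c + 2 * ‖H₂‖ := ⟨J - 2 * ‖H₂‖, by linarith, by ring⟩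
  set K := ‖H₂‖
  set a := ‖x‖
  set b := ‖y‖
  -- completing the square in `b`, with leading coefficient `c = J - 2K`
  have hsquare : (l - K ^ 2 / c) * (a ^ 2 + b ^ 2) =
      l * a ^ 2 - 2 * K * a * b - K * b ^ 2 + (c + 2 * K) * b ^ 2 -
        ((c * b - K * a) ^ 2 / c + (K - l) * b ^ 2 + K ^ 2 / c * b ^ 2) := by
    field_simp
    ring
  have hrest : 0 ≤ (c * b - K * a) ^ 2 / c + (K - l) * b ^ 2 + K ^ 2 / c * b ^ 2 := by
    have hKl := sub_nonneg.mpr hlH₂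
    positivity
  rw [add_sub_cancel_right, add_apply, inner_add_right, map_add, hH₁xy, hpyth, hsquare]
  linarith [hbig y hy, hl x hx, le_re_inner_add_apply_add H₂ x y]

end Estimates

section Rayleigh

omit [FiniteDimensional ℂ E]

theorem bddBelow_setOf_re_inner_apply_self (H : E →L[ℂ] E) (S : Submodule ℂ E) :
    BddBelow {r : ℝ | ∃ ψ ∈ S, ‖ψ‖ = 1 ∧ (inner (𝕜 := ℂ) ψ (H ψ)).re = r} := by
  refine ⟨-‖H‖, ?_⟩
  rintro r ⟨ψ, -, hψ, rfl⟩
  simpa [hψ] using neg_abs_le _ |>.trans' (neg_le_neg (abs_re_inner_apply_le H ψ ψ))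

theorem minEigenvalueOn_mul_norm_sq_le (H : E →L[ℂ] E) {S : Submodule ℂ E} {x : E}
    (hx : x ∈ S) : minEigenvalueOn H S * ‖x‖ ^ 2 ≤ (inner (𝕜 := ℂ) x (H x)).re := by
  rcases eq_or_ne x 0 with rfl | hx₀
  · simp
  set v : E := (‖x‖⁻¹ : ℂ) • x
  have hv : (inner (𝕜 := ℂ) v (H v)).re = ‖x‖⁻¹ ^ 2 * (inner (𝕜 := ℂ) x (H x)).re := by
    rw [map_smul, inner_smul_left, inner_smul_right, ← Complex.ofReal_inv, Complex.conj_ofReal,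
      Complex.re_ofReal_mul, Complex.re_ofReal_mul, sq, mul_assoc]
  have hle : minEigenvalueOn H S ≤ (inner (𝕜 := ℂ) v (H v)).re :=
    csInf_le (bddBelow_setOf_re_inner_apply_self H S)
      ⟨v, S.smul_mem _ hx, norm_smul_inv_norm hx₀, rfl⟩
  rwa [hv, inv_pow, ← div_eq_inv_mul, le_div_iff₀ (by positivity)] at hle

theorem le_minEigenvalueOn {H : E →L[ℂ] E} {S : Submodule ℂ E} (hS : S ≠ ⊥) {c : ℝ}
    (h : ∀ ψ ∈ S, c * ‖ψ‖ ^ 2 ≤ (inner (𝕜 := ℂ) ψ (H ψ)).re) : c ≤ minEigenvalueOn H S := by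
  obtain ⟨u, huS, hu⟩ := (Submodule.ne_bot_iff S).mp hS
  refine le_csInf ⟨_, _, S.smul_mem _ huS, norm_smul_inv_norm (𝕜 := ℂ) hu, rfl⟩ ?_
  rintro r ⟨ψ, hψS, hψ, rfl⟩
  simpa [hψ] using h ψ hψS

theorem minEigenvalueOn_le_norm (H : E →L[ℂ] E) {S : Submodule ℂ E} (hS : S ≠ ⊥) :
    minEigenvalueOn H S ≤ ‖H‖ := by
  obtain ⟨u, huS, hu⟩ := (Submodule.ne_bot_iff S).mp hS
  have hupper : (inner (𝕜 := ℂ) u (H u)).re ≤ ‖H‖ * ‖u‖ ^ 2 := by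
    simpa [sq, mul_assoc] using (le_abs_self _).trans (abs_re_inner_apply_le H u u)
  exact le_of_mul_le_mul_right ((minEigenvalueOn_mul_norm_sq_le H huS).trans hupper)
    (by positivity)

theorem minEigenvalueOn_le_of_le (H : E →L[ℂ] E) {S T : Submodule ℂ E} (hST : S ≤ T)
    (hS : S ≠ ⊥) : minEigenvalueOn H T ≤ minEigenvalueOn H S := by
  obtain ⟨u, huS, hu⟩ := (Submodule.ne_bot_iff S).mp hS
  refine csInf_le_csInf (bddBelow_setOf_re_inner_apply_self H T)
    ⟨_, _, S.smul_mem _ huS, norm_smul_inv_norm (𝕜 := ℂ) hu, rfl⟩ ?_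
  rintro r ⟨ψ, hψS, hψ, rfl⟩
  exact ⟨ψ, hST hψS, hψ, rfl⟩

theorem minEigenvalueOn_top (H : E →L[ℂ] E) : minEigenvalueOn H ⊤ = minEigenvalue H := by
  simp [minEigenvalueOn, minEigenvalue]

theorem minEigenvalueOn_add_of_forall_apply_eq_zero {H₁ : E →L[ℂ] E} (H₂ : E →L[ℂ] E)
    {S : Submodule ℂ E} (hker : ∀ ψ ∈ S, H₁ ψ = 0) :
    minEigenvalueOn (H₁ + H₂) S = minEigenvalueOn H₂ S := by
  unfold minEigenvalueOn
  congr 1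
  ext r
  refine exists_congr fun ψ => and_congr_right fun hψS => ?_
  simp [hker ψ hψS]

end Rayleigh

theorem projection_lemma_general
    (H₁ H₂ : E →L[ℂ] E) (hH₁ : IsSelfAdjoint H₁)
    (S : Submodule ℂ E) (hS : S ≠ ⊥) (J : ℝ)
    (hker : ∀ ψ ∈ S, H₁ ψ = 0)
    (hbig : ∀ ψ ∈ Sᗮ, J * ‖ψ‖ ^ 2 ≤ (inner (𝕜 := ℂ) ψ (H₁ ψ)).re)
    (hJ : 2 * ‖H₂‖ < J) :
    minEigenvalueOn H₂ S - ‖H₂‖ ^ 2 / (J - 2 * ‖H₂‖) ≤ minEigenvalue (H₁ + H₂) ∧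
      minEigenvalue (H₁ + H₂) ≤ minEigenvalueOn H₂ S := by
  rw [← minEigenvalueOn_top]
  constructor
  · exact le_minEigenvalueOn (ne_bot_of_le_ne_bot hS le_top) fun ψ _ =>
      mul_norm_sq_le_re_inner_add_apply H₁ H₂ hH₁.isSymmetric S
        (fun x hx => minEigenvalueOn_mul_norm_sq_le H₂ hx) (minEigenvalueOn_le_norm H₂ hS)
        hker hbig hJ ψ
  · rw [← minEigenvalueOn_add_of_forall_apply_eq_zero H₂ hker]
    exact minEigenvalueOn_le_of_le _ le_top hS

/-- **Projection Lemma** (Kempe–Kitaev–Regev). -/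
theorem projection_lemma
    (H₁ H₂ : E →L[ℂ] E) (hH₁ : IsSelfAdjoint H₁) (hH₂ : IsSelfAdjoint H₂)
    (S : Submodule ℂ E) (hS : S ≠ ⊥) (J : ℝ)
    (hker : ∀ ψ ∈ S, H₁ ψ = 0)
    (hbig : ∀ ψ ∈ Sᗮ, J * ‖ψ‖ ^ 2 ≤ (inner (𝕜 := ℂ) ψ (H₁ ψ)).re)
    (hJ : 2 * ‖H₂‖ < J) :
    minEigenvalueOn H₂ S - ‖H₂‖ ^ 2 / (J - 2 * ‖H₂‖) ≤ minEigenvalue (H₁ + H₂) ∧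
      minEigenvalue (H₁ + H₂) ≤ minEigenvalueOn H₂ S :=
  projection_lemma_general H₁ H₂ hH₁ S hS J hker hbig hJ
end

section
/- Let H = H₁ + H₂ be a sum of two Hermitian operators on a finite-dimensional complex Hilbert space ℋ, let S ⊆ ℋ be a nonzero subspace with H₁ψ = 0 for every ψ ∈ S and ⟨ψ, H₁ψ⟩ ≥ J‖ψ‖² for every ψ ∈ S^⊥, and set K := ‖H₂‖. Suppose a unit vector ψ decomposes as ψ = α₁ψ₁ + α₂ψ₂ where ψ₁ ∈ S and ψ₂ ∈ S^⊥ are unit vectors and α₁, α₂ are nonnegative reals with α₁² + α₂² = 1. Then ⟨ψ, Hψ⟩ ≥ λ(H₂|_S) + (J − 2K)α₂² − 2Kα₂. -/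
variable {E : Type*} [NormedAddCommGroup E] [InnerProductSpace ℂ E] [FiniteDimensional ℂ E]

/-- The key energy lower bound from the proof of the Projection Lemma: for a unit vector
`ψ = α₁ψ₁ + α₂ψ₂` with `ψ₁ ∈ S`, `ψ₂ ∈ S^⊥`, one has
`⟨ψ, Hψ⟩ ≥ λ(H₂|_S) + (J − 2K)α₂² − 2Kα₂` where `K = ‖H₂‖`. -/
theorem energy_lower_bound_decomposition
    (H₁ H₂ : E →L[ℂ] E) (hH₁ : IsSelfAdjoint H₁) (hH₂ : IsSelfAdjoint H₂)
    (S : Submodule ℂ E) (hS : S ≠ ⊥) (J K : ℝ) (hK : K = ‖H₂‖)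
    (hker : ∀ ψ ∈ S, H₁ ψ = 0)
    (hbig : ∀ ψ ∈ Sᗮ, J * ‖ψ‖ ^ 2 ≤ (inner (𝕜 := ℂ) ψ (H₁ ψ)).re)
    (ψ ψ₁ ψ₂ : E) (α₁ α₂ : ℝ)
    (hψ : ‖ψ‖ = 1) (hψ₁S : ψ₁ ∈ S) (hψ₂S : ψ₂ ∈ Sᗮ)
    (hψ₁ : ‖ψ₁‖ = 1) (hψ₂ : ‖ψ₂‖ = 1)
    (hα₁ : 0 ≤ α₁) (hα₂ : 0 ≤ α₂) (hα : α₁ ^ 2 + α₂ ^ 2 = 1)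
    (hdecomp : ψ = (α₁ : ℂ) • ψ₁ + (α₂ : ℂ) • ψ₂) :
    minEigenvalueOn H₂ S + (J - 2 * K) * α₂ ^ 2 - 2 * K * α₂ ≤
      (inner (𝕜 := ℂ) ψ ((H₁ + H₂) ψ)).re := by
  have hK0 : 0 ≤ K := hK ▸ norm_nonneg H₂
  have hsym₁ : ∀ x y : E, inner (𝕜 := ℂ) (H₁ x) y = inner (𝕜 := ℂ) x (H₁ y) :=
    ContinuousLinearMap.isSelfAdjoint_iff_isSymmetric.mp hH₁
  have hsym₂ : ∀ x y : E, inner (𝕜 := ℂ) (H₂ x) y = inner (𝕜 := ℂ) x (H₂ y) :=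
    ContinuousLinearMap.isSelfAdjoint_iff_isSymmetric.mp hH₂
  have hbound : ∀ x y : E, ‖x‖ = 1 → ‖y‖ = 1 → |(inner (𝕜 := ℂ) x (H₂ y)).re| ≤ K := by
    intro x y hx hy
    calc |(inner (𝕜 := ℂ) x (H₂ y)).re| ≤ ‖(inner (𝕜 := ℂ) x (H₂ y) : ℂ)‖ :=
          Complex.abs_re_le_norm _
      _ ≤ ‖x‖ * ‖H₂ y‖ := norm_inner_le_norm _ _
      _ ≤ ‖x‖ * (‖H₂‖ * ‖y‖) := by gcongr; exact H₂.le_opNorm y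
      _ = K := by rw [hx, hy, hK]; ring
  have hmemset : (inner (𝕜 := ℂ) ψ₁ (H₂ ψ₁)).re ∈
      {r : ℝ | ∃ ψ ∈ S, ‖ψ‖ = 1 ∧ (inner (𝕜 := ℂ) ψ (H₂ ψ)).re = r} := ⟨ψ₁, hψ₁S, hψ₁, rfl⟩
  have hbdd : BddBelow {r : ℝ | ∃ ψ ∈ S, ‖ψ‖ = 1 ∧ (inner (𝕜 := ℂ) ψ (H₂ ψ)).re = r} := by
    refine ⟨-K, ?_⟩
    rintro r ⟨x, hxS, hx, rfl⟩
    have h := hbound x x hx hx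
    have := neg_abs_le ((inner (𝕜 := ℂ) x (H₂ x)).re)
    linarith
  set lam := minEigenvalueOn H₂ S with hlam
  have hlamle : lam ≤ (inner (𝕜 := ℂ) ψ₁ (H₂ ψ₁)).re := csInf_le hbdd hmemset
  have hlamge : -K ≤ lam := by
    refine le_csInf ⟨_, hmemset⟩ ?_
    rintro r ⟨x, hxS, hx, rfl⟩
    have h := hbound x x hx hx
    have := neg_abs_le ((inner (𝕜 := ℂ) x (H₂ x)).re)
    linarith
  have hlamK : lam ≤ K := by
    have h := hbound ψ₁ ψ₁ hψ₁ hψ₁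
    have := le_abs_self ((inner (𝕜 := ℂ) ψ₁ (H₂ ψ₁)).re)
    linarith
  have hH1ψ₁ : H₁ ψ₁ = 0 := hker ψ₁ hψ₁S
  have h12 : inner (𝕜 := ℂ) ψ₁ (H₁ ψ₂) = 0 := by
    rw [← hsym₁, hH1ψ₁, inner_zero_left]
  -- expansion of the H₁ term
  have e1 : (inner (𝕜 := ℂ) ψ (H₁ ψ)).re = α₂ ^ 2 * (inner (𝕜 := ℂ) ψ₂ (H₁ ψ₂)).re := by
    rw [hdecomp]
    simp only [map_add, map_smul, inner_add_left, inner_add_right, inner_smul_left,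
      inner_smul_right, hH1ψ₁, smul_zero, inner_zero_right, mul_zero, add_zero, zero_add, h12,
      Complex.conj_ofReal]
    simp only [Complex.add_re, Complex.mul_re, Complex.ofReal_re, Complex.ofReal_im]
    ring
  -- expansion of the H₂ term
  have e2 : (inner (𝕜 := ℂ) ψ (H₂ ψ)).re =
      α₁ ^ 2 * (inner (𝕜 := ℂ) ψ₁ (H₂ ψ₁)).re +
      2 * (α₁ * α₂) * (inner (𝕜 := ℂ) ψ₁ (H₂ ψ₂)).re +
      α₂ ^ 2 * (inner (𝕜 := ℂ) ψ₂ (H₂ ψ₂)).re := by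
    have h21 : inner (𝕜 := ℂ) ψ₂ (H₂ ψ₁) = starRingEnd ℂ (inner (𝕜 := ℂ) ψ₁ (H₂ ψ₂)) := by
      rw [← hsym₂, inner_conj_symm]
    rw [hdecomp]
    simp only [map_add, map_smul, inner_add_left, inner_add_right, inner_smul_left,
      inner_smul_right, Complex.conj_ofReal, h21]
    simp only [Complex.add_re, Complex.mul_re, Complex.ofReal_re, Complex.ofReal_im,
      Complex.conj_re, Complex.conj_im]
    ring
  have hα₁le : α₁ ≤ 1 := by nlinarith [sq_nonneg α₂]
  have hα₂le : α₂ ≤ 1 := by nlinarith [sq_nonneg α₁]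
  have hJ : J ≤ (inner (𝕜 := ℂ) ψ₂ (H₁ ψ₂)).re := by
    have := hbig ψ₂ hψ₂S; rwa [hψ₂, one_pow, mul_one] at this
  have hb12 : -K ≤ (inner (𝕜 := ℂ) ψ₁ (H₂ ψ₂)).re := by
    have h := hbound ψ₁ ψ₂ hψ₁ hψ₂
    have := neg_abs_le ((inner (𝕜 := ℂ) ψ₁ (H₂ ψ₂)).re)
    linarith
  have hb22 : -K ≤ (inner (𝕜 := ℂ) ψ₂ (H₂ ψ₂)).re := by
    have h := hbound ψ₂ ψ₂ hψ₂ hψ₂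
    have := neg_abs_le ((inner (𝕜 := ℂ) ψ₂ (H₂ ψ₂)).re)
    linarith
  have etot : (inner (𝕜 := ℂ) ψ ((H₁ + H₂) ψ)).re =
      (inner (𝕜 := ℂ) ψ (H₁ ψ)).re + (inner (𝕜 := ℂ) ψ (H₂ ψ)).re := by
    simp [inner_add_right]
  rw [etot, e1, e2]
  nlinarith [mul_le_mul_of_nonneg_left hJ (sq_nonneg α₂),
    mul_le_mul_of_nonneg_left hlamle (sq_nonneg α₁),
    mul_le_mul_of_nonneg_left hb12 (mul_nonneg hα₁ hα₂),
    mul_le_mul_of_nonneg_left hb22 (sq_nonneg α₂),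
    mul_le_mul_of_nonneg_left hlamK (sq_nonneg α₂),
    mul_nonneg (mul_nonneg hK0 hα₂) (sub_nonneg.2 hα₁le)]
end

section
/- (Real-number form of the ground-space structure of Ambainis's query Hamiltonian) Fix an integer m ≥ 1 and ε > 0, and for each i ∈ {1,…,m} and each prefix y₁⋯y_{i−1} ∈ {0,1}^{i−1} let g(i, y₁⋯y_{i−1}) ≥ 0 be a nonnegative real. Then at least one correct query string exists, and, letting λ denote the minimum of λ_x over all correct query strings x ∈ {0,1}^m, every incorrect query string y ∈ {0,1}^m satisfies λ_y ≥ λ + ε/4^m. -/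
/-- The prefix `y₁⋯y_{i−1}` of a query string `y` (here zero-indexed). -/
def prefixOf {m : ℕ} (y : Fin m → Bool) (i : Fin m) : Fin i → Bool :=
  fun j => y ⟨j, j.isLt.trans i.isLt⟩

/-- The block energy `λ_y = Σ_{i=1}^m 4^{−(i−1)} c_i(y)`, where `c_i(y) = 2ε` if `y_i = 0`
and `c_i(y) = g(i, y₁⋯y_{i−1})` if `y_i = 1`. -/
noncomputable def blockEnergy (m : ℕ) (ε : ℝ)
    (g : (i : Fin m) → (Fin i → Bool) → ℝ) (y : Fin m → Bool) : ℝ :=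
  ∑ i : Fin m, ((4 : ℝ)⁻¹) ^ (i : ℕ) * (if y i then g i (prefixOf y i) else 2 * ε)

/-- `y` is a correct query string: `g(i, y₁⋯y_{i−1}) ≤ ε` forces `y_i = 1`, and
`g(i, y₁⋯y_{i−1}) ≥ 3ε` forces `y_i = 0`. -/
def CorrectQueryString (m : ℕ) (ε : ℝ)
    (g : (i : Fin m) → (Fin i → Bool) → ℝ) (y : Fin m → Bool) : Prop :=
  ∀ i : Fin m,
    (g i (prefixOf y i) ≤ ε → y i = true) ∧ (3 * ε ≤ g i (prefixOf y i) → y i = false)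

/-!
Let `y` be incorrect and let `k` be the first query it answers wrongly. Keep `y` below `k` and
from `k` on answer greedily, `z_i = [g(i, z₁⋯z_{i−1}) ≤ 2ε]`; the result `z` is correct and pays
`min(g, 2ε) ≤ 2ε` at every query from `k` on. At query `k` the wrong answer of `y` costs at least
`ε` more than `min(g, 2ε)`, while at each later query `z` pays at most `2ε` more than `y`
(costs are nonnegative). With the weights `4^{−i}` the gain `ε·4^{−k}` beats the possible losses
`2ε·Σ_{i>k} 4^{−i} ≤ (2ε/3)·4^{−k}`, so `λ_z + ε·4^{−k}/3 ≤ λ_y`, and `λ ≤ λ_z`.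
-/

open Finset

lemma div_four_pow_le_sum_range {m k : ℕ} (hkm : k < m) {ε : ℝ} (hε : 0 ≤ ε) (d : ℕ → ℝ)
    (h_lt : ∀ n < k, d n = 0) (h_eq : ε ≤ d k) (h_gt : ∀ n, k < n → n < m → -(2 * ε) ≤ d n) :
    ε / 4 ^ m ≤ ∑ n ∈ range m, (4 : ℝ)⁻¹ ^ n * d n := by
  have h_head : ∑ n ∈ range k, (4 : ℝ)⁻¹ ^ n * d n = 0 :=
    sum_eq_zero fun n hn => by rw [h_lt n (mem_range.1 hn), mul_zero]
  have h_tail : -(2 * ε) * ((4 : ℝ)⁻¹ ^ (k + 1) / (1 - 4⁻¹)) ≤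
      ∑ n ∈ Ico (k + 1) m, (4 : ℝ)⁻¹ ^ n * d n :=
    calc -(2 * ε) * ((4 : ℝ)⁻¹ ^ (k + 1) / (1 - 4⁻¹))
        ≤ -(2 * ε) * ∑ n ∈ Ico (k + 1) m, (4 : ℝ)⁻¹ ^ n :=
          mul_le_mul_of_nonpos_left (geom_sum_Ico_le_of_lt_one (by norm_num) (by norm_num))
            (by linarith)
      _ = ∑ n ∈ Ico (k + 1) m, (4 : ℝ)⁻¹ ^ n * -(2 * ε) := by rw [mul_sum]; simp only [mul_comm]
      _ ≤ ∑ n ∈ Ico (k + 1) m, (4 : ℝ)⁻¹ ^ n * d n := by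
          gcongr with n hn
          exact h_gt n (mem_Ico.1 hn).1 (mem_Ico.1 hn).2
  rw [← sum_range_add_sum_Ico _ hkm.le, h_head, sum_eq_sum_Ico_succ_bot hkm, zero_add]
  have h_geom : (4 : ℝ)⁻¹ ^ (k + 1) / (1 - 4⁻¹) = 4⁻¹ ^ k / 3 := by rw [pow_succ]; ring
  have h_gain : (4 : ℝ)⁻¹ ^ k * ε ≤ (4 : ℝ)⁻¹ ^ k * d k := by gcongr
  have h_m : ε / 4 ^ m ≤ ε / 4 * 4⁻¹ ^ k :=
    calc ε / 4 ^ m ≤ ε / 4 ^ (k + 1) := div_le_div_of_nonneg_left hε (by positivity)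
          (pow_le_pow_right₀ (by norm_num) hkm)
      _ = ε / 4 * 4⁻¹ ^ k := by rw [pow_succ', inv_pow]; ring
  have h_pos : 0 ≤ (4 : ℝ)⁻¹ ^ k * ε := by positivity
  rw [h_geom] at h_tail
  linarith

lemma div_four_pow_le_sum_fin {m : ℕ} {ε : ℝ} (hε : 0 ≤ ε) (d : Fin m → ℝ) (k : Fin m)
    (h_lt : ∀ i < k, d i = 0) (h_eq : ε ≤ d k) (h_gt : ∀ i, k < i → -(2 * ε) ≤ d i) :
    ε / 4 ^ m ≤ ∑ i : Fin m, (4 : ℝ)⁻¹ ^ (i : ℕ) * d i := by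
  have h := div_four_pow_le_sum_range k.isLt hε (fun n => if h : n < m then d ⟨n, h⟩ else 0)
    (fun n hn => by rw [dif_pos (hn.trans k.isLt)]; exact h_lt _ hn) (by simpa using h_eq)
    (fun n hkn hn => by rw [dif_pos hn]; exact h_gt _ hkn)
  rwa [← Fin.sum_univ_eq_sum_range (fun n => (4 : ℝ)⁻¹ ^ n * if h : n < m then d ⟨n, h⟩ else 0),
    sum_congr rfl fun i _ => by rw [dif_pos i.isLt]] at h

section QueryStrings

noncomputable def queryCost {m : ℕ} (ε : ℝ) (g : (i : Fin m) → (Fin i → Bool) → ℝ)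
    (y : Fin m → Bool) (i : Fin m) : ℝ :=
  if y i then g i (prefixOf y i) else 2 * ε

def CorrectAt {m : ℕ} (ε : ℝ) (g : (i : Fin m) → (Fin i → Bool) → ℝ) (y : Fin m → Bool)
    (i : Fin m) : Prop :=
  (g i (prefixOf y i) ≤ ε → y i = true) ∧ (3 * ε ≤ g i (prefixOf y i) → y i = false)

noncomputable def greedyCompletion {m : ℕ} (ε : ℝ) (g : (i : Fin m) → (Fin i → Bool) → ℝ)
    (y : Fin m → Bool) (k : ℕ) (i : Fin m) : Bool :=
  if (i : ℕ) < k then y i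
  else decide (g i (fun j => greedyCompletion ε g y k ⟨j, j.isLt.trans i.isLt⟩) ≤ 2 * ε)
termination_by i.val
decreasing_by exact j.isLt

variable {m : ℕ} {ε : ℝ} {g : (i : Fin m) → (Fin i → Bool) → ℝ} {y : Fin m → Bool} {k : ℕ}
  {i : Fin m}

lemma blockEnergy_eq_sum_queryCost (y : Fin m → Bool) :
    blockEnergy m ε g y = ∑ i : Fin m, (4 : ℝ)⁻¹ ^ (i : ℕ) * queryCost ε g y i := rfl

lemma queryCost_nonneg (hε : 0 ≤ ε) (hg : ∀ i w, 0 ≤ g i w) : 0 ≤ queryCost ε g y i := by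
  unfold queryCost; split
  · exact hg _ _
  · linarith

lemma min_add_le_queryCost (hy : ¬ CorrectAt ε g y i) :
    min (g i (prefixOf y i)) (2 * ε) + ε ≤ queryCost ε g y i := by
  unfold CorrectAt at hy
  unfold queryCost
  cases hyi : y i
  · have : g i (prefixOf y i) ≤ ε := by simpa [hyi] using hy
    simp only [Bool.false_eq_true, if_false]
    linarith [min_le_left (g i (prefixOf y i)) (2 * ε)]
  · have : 3 * ε ≤ g i (prefixOf y i) := by simpa [hyi] using hy
    simp only [if_true]
    linarith [min_le_right (g i (prefixOf y i)) (2 * ε)]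

lemma greedyCompletion_of_lt (h : (i : ℕ) < k) : greedyCompletion ε g y k i = y i := by
  rw [greedyCompletion, if_pos h]

lemma prefixOf_greedyCompletion (h : (i : ℕ) ≤ k) :
    prefixOf (greedyCompletion ε g y k) i = prefixOf y i :=
  funext fun j => greedyCompletion_of_lt (j.isLt.trans_le h)

lemma greedyCompletion_of_le (h : k ≤ (i : ℕ)) :
    greedyCompletion ε g y k i =
      decide (g i (prefixOf (greedyCompletion ε g y k) i) ≤ 2 * ε) := by
  rw [greedyCompletion, if_neg h.not_gt]; rfl

lemma queryCost_greedyCompletion (h : k ≤ (i : ℕ)) :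
    queryCost ε g (greedyCompletion ε g y k) i =
      min (g i (prefixOf (greedyCompletion ε g y k) i)) (2 * ε) := by
  unfold queryCost
  rw [greedyCompletion_of_le h]
  simp only [decide_eq_true_eq]
  split_ifs with hle
  exacts [(min_eq_left hle).symm, (min_eq_right (not_le.1 hle).le).symm]

lemma correctQueryString_greedyCompletion (hε : 0 < ε)
    (hy : ∀ i : Fin m, (i : ℕ) < k → CorrectAt ε g y i) :
    CorrectQueryString m ε g (greedyCompletion ε g y k) := by
  intro i
  rcases lt_or_ge (i : ℕ) k with h | h
  · rw [greedyCompletion_of_lt h, prefixOf_greedyCompletion h.le]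
    exact hy i h
  · rw [greedyCompletion_of_le h]
    exact ⟨fun hle => decide_eq_true (by linarith), fun hge => decide_eq_false (by linarith)⟩

lemma exists_correctQueryString_blockEnergy_add_le (hε : 0 < ε) (hg : ∀ i w, 0 ≤ g i w)
    (hy : ¬ CorrectQueryString m ε g y) :
    ∃ z, CorrectQueryString m ε g z ∧ blockEnergy m ε g z + ε / 4 ^ m ≤ blockEnergy m ε g y := by
  obtain ⟨k, hk, hk_min⟩ := wellFounded_lt.has_min {i | ¬ CorrectAt ε g y i} (not_forall.1 hy)
  have h_below (j : Fin m) (hj : j < k) : CorrectAt ε g y j := by_contra fun h => hk_min j h hj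
  have h_diff := div_four_pow_le_sum_fin hε.le
    (fun i => queryCost ε g y i - queryCost ε g (greedyCompletion ε g y k) i) k
    (fun i hi => by
      rw [sub_eq_zero, queryCost, queryCost, greedyCompletion_of_lt hi,
        prefixOf_greedyCompletion hi.le])
    (by
      have := min_add_le_queryCost hk
      rw [queryCost_greedyCompletion le_rfl, prefixOf_greedyCompletion le_rfl]
      linarith)
    (fun i hi => by
      have := queryCost_nonneg (y := y) (i := i) hε.le hg
      rw [queryCost_greedyCompletion hi.le]
      linarith [min_le_right (g i (prefixOf (greedyCompletion ε g y k) i)) (2 * ε)])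
  simp only [mul_sub, sum_sub_distrib, ← blockEnergy_eq_sum_queryCost] at h_diff
  exact ⟨_, correctQueryString_greedyCompletion hε h_below, by linarith⟩

end QueryStrings

theorem ambainis_query_hamiltonian_ground_space_general (m : ℕ) (ε : ℝ) (hε : 0 < ε)
    (g : (i : Fin m) → (Fin i → Bool) → ℝ) (hg : ∀ i w, 0 ≤ g i w) :
    ∃ x : Fin m → Bool, CorrectQueryString m ε g x ∧
      (∀ x' : Fin m → Bool, CorrectQueryString m ε g x' →
        blockEnergy m ε g x ≤ blockEnergy m ε g x') ∧
      ∀ y : Fin m → Bool, ¬ CorrectQueryString m ε g y →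
        blockEnergy m ε g x + ε / 4 ^ m ≤ blockEnergy m ε g y := by
  have h_greedy : CorrectQueryString m ε g (greedyCompletion ε g (fun _ => false) 0) :=
    correctQueryString_greedyCompletion hε fun i hi => absurd hi (Nat.not_lt_zero _)
  obtain ⟨x, hx, hx_min⟩ := Set.exists_min_image {x | CorrectQueryString m ε g x}
    (blockEnergy m ε g) (Set.toFinite _) ⟨_, h_greedy⟩
  refine ⟨x, hx, hx_min, fun y hy => ?_⟩
  obtain ⟨z, hz, hzy⟩ := exists_correctQueryString_blockEnergy_add_le hε hg hy
  linarith [hx_min z hz]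

/-- **Ground-space structure of Ambainis's query Hamiltonian** (real-number form):
a correct query string exists, and letting `λ` be the minimum block energy over correct
query strings, every incorrect query string `y` satisfies `λ_y ≥ λ + ε/4^m`. -/
theorem ambainis_query_hamiltonian_ground_space (m : ℕ) (hm : 1 ≤ m) (ε : ℝ) (hε : 0 < ε)
    (g : (i : Fin m) → (Fin i → Bool) → ℝ) (hg : ∀ i w, 0 ≤ g i w) :
    ∃ x : Fin m → Bool, CorrectQueryString m ε g x ∧
      (∀ x' : Fin m → Bool, CorrectQueryString m ε g x' →
        blockEnergy m ε g x ≤ blockEnergy m ε g x') ∧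
      ∀ y : Fin m → Bool, ¬ CorrectQueryString m ε g y →
        blockEnergy m ε g x + ε / 4 ^ m ≤ blockEnergy m ε g y :=
  ambainis_query_hamiltonian_ground_space_general m ε hε g hg
end

section
/- (Real-number form of the validated query Hamiltonian's spectral structure) Fix an integer m ≥ 1 and reals ε, δ with 0 ≤ δ ≤ ε/9, and for each i ∈ {1,…,m} and each prefix y₁⋯y_{i−1} ∈ {0,1}^{i−1} let g(i, y₁⋯y_{i−1}) ≥ 0 be a nonnegative real satisfying g(i, y₁⋯y_{i−1}) ∉ (ε + δ, 3ε − δ). Call y ∈ {0,1}^m the correct query string if for every i, y_i = 1 exactly when g(i, y₁⋯y_{i−1}) ≤ ε + δ. Then the correct query string x is unique, and every y ∈ {0,1}^m with y ≠ x satisfies λ_y ≥ λ_x + (ε − δ)/4^m. -/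
/-- `y` is the correct query string for the validated query Hamiltonian:
`y_i = 1` exactly when `g(i, y₁⋯y_{i−1}) ≤ ε + δ`. -/
def CorrectValidated (m : ℕ) (ε δ : ℝ)
    (g : (i : Fin m) → (Fin i → Bool) → ℝ) (y : Fin m → Bool) : Prop :=
  ∀ i : Fin m, y i = true ↔ g i (prefixOf y i) ≤ ε + δ

open Classical in
noncomputable def corrStr (m : ℕ) (ε δ : ℝ)
    (g : (i : Fin m) → (Fin i → Bool) → ℝ) : ℕ → Bool
  | n =>
    if hn : n < m then
      if g ⟨n, hn⟩ (fun j => corrStr m ε δ g j.val) ≤ ε + δ then true else false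
    else false
termination_by n => n
decreasing_by all_goals exact j.isLt

theorem corrStr_spec (m : ℕ) (ε δ : ℝ) (g : (i : Fin m) → (Fin i → Bool) → ℝ)
    (n : ℕ) (hn : n < m) :
    corrStr m ε δ g n = true ↔ g ⟨n, hn⟩ (fun j => corrStr m ε δ g j.val) ≤ ε + δ := by
  rw [corrStr]
  simp [hn]

/-- **Spectral structure of the validated query Hamiltonian** (real-number form):
if every `g(i, ·)` avoids the interval `(ε + δ, 3ε − δ)`, then the correct query string
`x` is unique and every `y ≠ x` satisfies `λ_y ≥ λ_x + (ε − δ)/4^m`. -/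
theorem validated_query_hamiltonian (m : ℕ) (hm : 1 ≤ m) (ε δ : ℝ)
    (hδ0 : 0 ≤ δ) (hδε : δ ≤ ε / 9)
    (g : (i : Fin m) → (Fin i → Bool) → ℝ) (hg : ∀ i w, 0 ≤ g i w)
    (hvalid : ∀ i w, g i w ≤ ε + δ ∨ 3 * ε - δ ≤ g i w) :
    ∃ x : Fin m → Bool, CorrectValidated m ε δ g x ∧
      (∀ x' : Fin m → Bool, CorrectValidated m ε δ g x' → x' = x) ∧
      ∀ y : Fin m → Bool, y ≠ x →
        blockEnergy m ε g x + (ε - δ) / 4 ^ m ≤ blockEnergy m ε g y := by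
  have hε : 0 ≤ ε := by linarith
  refine ⟨fun i => corrStr m ε δ g i.val, ?_, ?_, ?_⟩ <;>
    [skip; skip; skip]
  case _ =>
    intro i
    exact corrStr_spec m ε δ g i.val i.isLt
  all_goals
    set x : Fin m → Bool := fun i => corrStr m ε δ g i.val with hxdef
  all_goals
    have hx : CorrectValidated m ε δ g x := fun i => corrStr_spec m ε δ g i.val i.isLt
  · -- uniqueness
    intro x' hx'
    have H : ∀ n : ℕ, ∀ hn : n < m, x' ⟨n, hn⟩ = x ⟨n, hn⟩ := by
      intro n
      induction n using Nat.strong_induction_on with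
      | _ n ih =>
        intro hn
        have hpre : prefixOf x' ⟨n, hn⟩ = prefixOf x ⟨n, hn⟩ := by
          funext j
          exact ih j.val j.isLt _
        have h1 := hx' ⟨n, hn⟩
        have h2 := hx ⟨n, hn⟩
        rw [hpre] at h1
        rw [Bool.eq_iff_iff]
        simp only [h1, h2]
    funext i
    exact H i.val i.isLt
  · -- energy gap
    intro y hy
    have hSne : (Finset.univ.filter (fun j : Fin m => y j ≠ x j)).Nonempty := by
      by_contra h
      apply hy
      funext j
      by_contra hj
      exact h ⟨j, Finset.mem_filter.2 ⟨Finset.mem_univ _, hj⟩⟩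
    obtain ⟨i, hi_mem, hi_min⟩ :
        ∃ i ∈ Finset.univ.filter (fun j : Fin m => y j ≠ x j),
          ∀ j ∈ Finset.univ.filter (fun j : Fin m => y j ≠ x j), i ≤ j :=
      ⟨_, Finset.min'_mem _ hSne, fun j hj => Finset.min'_le _ j hj⟩
    have hyi : y i ≠ x i := (Finset.mem_filter.1 hi_mem).2
    have hlt : ∀ j : Fin m, j < i → y j = x j := by
      intro j hj
      by_contra hcon
      exact absurd hj (not_lt.2 (hi_min j (Finset.mem_filter.2 ⟨Finset.mem_univ _, hcon⟩)))
    have hpre : ∀ j : Fin m, j ≤ i → prefixOf y j = prefixOf x j := by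
      intro j hj
      funext k
      exact hlt ⟨k.val, k.isLt.trans j.isLt⟩ (lt_of_lt_of_le (by exact k.isLt) hj)
    set G : ℕ → ℝ := fun n =>
      if n = i.val then ((4:ℝ)⁻¹) ^ (i:ℕ) * (ε - δ)
      else if i.val < n then -(2 * ε) * ((4:ℝ)⁻¹) ^ n else 0 with hGdef
    have key : ∀ j : Fin m,
        ((4:ℝ)⁻¹) ^ (j:ℕ) * (if x j then g j (prefixOf x j) else 2 * ε) + G j.val
        ≤ ((4:ℝ)⁻¹) ^ (j:ℕ) * (if y j then g j (prefixOf y j) else 2 * ε) := by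
      intro j
      have hp4 : (0:ℝ) < ((4:ℝ)⁻¹) ^ (j:ℕ) := pow_pos (by norm_num) _
      rcases lt_trichotomy j i with hji | hji | hji
      · have hji' : (j:ℕ) < (i:ℕ) := hji
        have h1 : y j = x j := hlt j hji
        have h2 : prefixOf y j = prefixOf x j := hpre j (le_of_lt hji)
        have h3 : G j.val = 0 := by
          simp only [hGdef]
          rw [if_neg (by omega), if_neg (by omega)]
        rw [h1, h2, h3, add_zero]
      · subst hji
        have h2 : prefixOf y j = prefixOf x j := hpre j le_rfl
        have h3 : G j.val = ((4:ℝ)⁻¹) ^ (j:ℕ) * (ε - δ) := by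
          simp [hGdef]
        rw [h2, h3]
        by_cases hxj : x j = true
        · have hgx : g j (prefixOf x j) ≤ ε + δ := (hx j).1 hxj
          have hyj : y j = false := by
            cases hyb : y j
            · rfl
            · exact absurd (hyb.trans hxj.symm) hyi
          rw [hxj, hyj, if_pos rfl, if_neg (by simp)]
          nlinarith [hp4, hgx]
        · have hxj' : x j = false := by simpa using hxj
          have hgx : ¬ g j (prefixOf x j) ≤ ε + δ := fun h => hxj ((hx j).2 h)
          have hgx2 : 3 * ε - δ ≤ g j (prefixOf x j) := (hvalid j _).resolve_left hgx
          have hyj : y j = true := by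
            cases hyb : y j
            · exact absurd (hyb.trans hxj'.symm) hyi
            · rfl
          rw [hxj', hyj, if_pos rfl, if_neg (by simp)]
          nlinarith [hp4, hgx2]
      · have hji' : (i:ℕ) < (j:ℕ) := hji
        have h3 : G j.val = -(2 * ε) * ((4:ℝ)⁻¹) ^ (j:ℕ) := by
          simp only [hGdef]
          rw [if_neg (by omega), if_pos hji']
        rw [h3]
        have htx : (if x j then g j (prefixOf x j) else 2 * ε) ≤ 2 * ε := by
          by_cases hxj : x j = true
          · rw [hxj, if_pos rfl]
            have := (hx j).1 hxj
            linarith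
          · rw [show x j = false by simpa using hxj, if_neg (by simp)]
        have hty : 0 ≤ (if y j then g j (prefixOf y j) else 2 * ε) := by
          by_cases hyj : y j = true
          · rw [hyj, if_pos rfl]; exact hg j _
          · rw [show y j = false by simpa using hyj, if_neg (by simp)]; linarith
        nlinarith [hp4, htx, hty]
    have hsum : blockEnergy m ε g x + ∑ j : Fin m, G j.val ≤ blockEnergy m ε g y := by
      unfold blockEnergy
      rw [← Finset.sum_add_distrib]
      exact Finset.sum_le_sum (fun j _ => key j)
    have hGsum : (ε - δ) / 4 ^ m ≤ ∑ j : Fin m, G j.val := by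
      have h1 : ∑ j : Fin m, G j.val = ∑ n ∈ Finset.range m, G n :=
        Fin.sum_univ_eq_sum_range _ _
      have hsplit : ∀ n, G n = (if n = i.val then ((4:ℝ)⁻¹) ^ (i:ℕ) * (ε - δ) else 0)
          + (if i.val < n then -(2 * ε) * ((4:ℝ)⁻¹) ^ n else 0) := by
        intro n
        simp only [hGdef]
        by_cases h1 : n = i.val
        · subst h1
          simp
        · by_cases h2 : i.val < n
          · simp [h1, h2]
          · simp [h1, h2]
      rw [h1]
      simp only [hsplit]
      rw [Finset.sum_add_distrib]
      have hA : (∑ n ∈ Finset.range m, if n = i.val then ((4:ℝ)⁻¹) ^ (i:ℕ) * (ε - δ) else 0)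
          = ((4:ℝ)⁻¹) ^ (i:ℕ) * (ε - δ) := by
        rw [Finset.sum_ite_eq' (Finset.range m) i.val]
        rw [if_pos (Finset.mem_range.2 i.isLt)]
      have hB : (∑ n ∈ Finset.range m, if i.val < n then -(2 * ε) * ((4:ℝ)⁻¹) ^ n else 0)
          = -(2 * ε) * ∑ n ∈ Finset.Ico (i.val + 1) m, ((4:ℝ)⁻¹) ^ n := by
        rw [Finset.mul_sum, ← Finset.sum_filter]
        congr 1
        ext n
        simp only [Finset.mem_filter, Finset.mem_range, Finset.mem_Ico]
        omega
      rw [hA, hB]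
      have hgeo : ∑ n ∈ Finset.Ico (i.val + 1) m, ((4:ℝ)⁻¹) ^ n
          = (((4:ℝ)⁻¹) ^ m - ((4:ℝ)⁻¹) ^ (i.val + 1)) / ((4:ℝ)⁻¹ - 1) :=
        geom_sum_Ico (by norm_num) i.isLt
      have hdiv : (((4:ℝ)⁻¹) ^ m - ((4:ℝ)⁻¹) ^ (i.val + 1)) / ((4:ℝ)⁻¹ - 1)
          = (((4:ℝ)⁻¹) ^ (i.val + 1) - ((4:ℝ)⁻¹) ^ m) * (4 / 3) := by
        rw [div_eq_iff (by norm_num : ((4:ℝ)⁻¹ - 1) ≠ 0)]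
        ring
      rw [hgeo, hdiv, pow_succ]
      have hpow_pos : (0:ℝ) < ((4:ℝ)⁻¹) ^ m := pow_pos (by norm_num) m
      have hpow_i : ((4:ℝ)⁻¹) ^ m ≤ ((4:ℝ)⁻¹) ^ (i.val + 1) :=
        pow_le_pow_of_le_one (by norm_num) (by norm_num) i.isLt
      rw [pow_succ] at hpow_i
      have h4b : 4 * ((4:ℝ)⁻¹) ^ m ≤ ((4:ℝ)⁻¹) ^ (i.val) := by linarith
      have h4m : (ε - δ) / 4 ^ m = (ε - δ) * ((4:ℝ)⁻¹) ^ m := by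
        rw [div_eq_mul_inv, ← inv_pow]
      rw [h4m]
      nlinarith [mul_nonneg (by linarith : (0:ℝ) ≤ ((4:ℝ)⁻¹) ^ (i.val) - 4 * ((4:ℝ)⁻¹) ^ m)
          (by linarith : (0:ℝ) ≤ ε / 3 - δ),
        mul_nonneg hpow_pos.le (by linarith : (0:ℝ) ≤ 3 * ε - 3 * δ)]
    linarith
end
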